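/- arXiv:2205.02984 — 2 statements merged into one kernel-verified Lean document; each statement's English description precedes it below -/
import Mathlib

section
/- If D is a common divisor of real polynomials F and G, and r is a common real root of F and G (equivalently a root of D when D = gcd), then for every j, Σ_{i=1}^m b_{ij} r^{i-1} = 0, where (b_{ij}) = Bez(F,G); i.e., the vector (1, r, r^2, ..., r^{m-1}) lies in the left kernel of the Bézout matrix. -/
/-!
Write `B(x, y)` for the Bézoutian, so that `(x - y) B(x, y) = F(x) G(y) - F(y) G(x)`.
Substituting `x = r` kills the right-hand side, hence `B(r, y) = 0` as a polynomial in `y`.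
The column sum `∑_{i < m} bᵢⱼ rⁱ` is the coefficient of `yʲ` in `B(r, y)` as soon as `B` has
degree `< m` in `x`. This bound holds in `y`, since the right-hand side has degree `≤ m` in `y`,
and it transfers to `x` because `B` is symmetric under `x ↔ y`.
-/

open Polynomial

/-- The Bézoutian of `F` and `G`: the bivariate polynomial
`(F(x)G(y) - F(y)G(x))/(x - y)`, represented as an element of `(ℝ[X])[Y]`
where the inner variable is `x` and the outer variable is `y`. -/
noncomputable def bezoutian (F G : ℝ[X]) : Polynomial ℝ[X] :=
  -((Polynomial.C F * G.map Polynomial.C - F.map Polynomial.C * Polynomial.C G) /ₘ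
      (Polynomial.X - Polynomial.C Polynomial.X))

/-- The `m × m` Bézout matrix of `F` and `G`: entry `(i, j)` (0-based) is the
coefficient of `x^i y^j` in the Bézoutian. -/
noncomputable def bezMat (m : ℕ) (F G : ℝ[X]) : Matrix (Fin m) (Fin m) ℝ :=
  fun i j => ((bezoutian F G).coeff (j : ℕ)).coeff (i : ℕ)

open Polynomial.Bivariate

theorem Polynomial.Bivariate.coeff_coeff_swap {R : Type*} [CommSemiring R] (p : R[X][Y])
    (i j : ℕ) : ((swap p).coeff j).coeff i = (p.coeff i).coeff j := by
  induction p using Polynomial.induction_on' with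
  | add p q hp hq => simp only [map_add, coeff_add, hp, hq]
  | monomial n f =>
    rw [swap_monomial, coeff_mul_C, coeff_map, coeff_C_mul, coeff_X_pow, coeff_monomial]
    split_ifs <;> simp_all

theorem C_X_sub_Y_mul_bezoutian (F G : ℝ[X]) :
    (C X - Y) * bezoutian F G = C F * G.map C - F.map C * C G := by
  have hroot : (C F * G.map C - F.map C * C G).IsRoot X := by
    simp [IsRoot, eval_map, eval₂_C_X]
  rw [bezoutian]
  linear_combination mul_divByMonic_eq_iff_isRoot.2 hroot

theorem swap_bezoutian (F G : ℝ[X]) : swap (bezoutian F G) = bezoutian F G := by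
  have h := congrArg swap (C_X_sub_Y_mul_bezoutian F G)
  rw [map_mul, map_sub, map_sub, map_mul, map_mul, swap_X, swap_Y, swap_C, swap_C, swap_map_C,
    swap_map_C] at h
  refine mul_left_cancel₀ (X_sub_C_ne_zero (X : ℝ[X])) ?_
  linear_combination h + C_X_sub_Y_mul_bezoutian F G

theorem degree_bezoutian_lt {m : ℕ} {F G : ℝ[X]} (hF : F.natDegree ≤ m)
    (hG : G.natDegree ≤ m) : (bezoutian F G).degree < m := by
  have hP : (C F * G.map C - F.map C * C G).natDegree ≤ m :=
    (natDegree_sub_le _ _).trans <| max_le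
      ((natDegree_C_mul_le _ _).trans (natDegree_map_le.trans hG))
      ((natDegree_mul_C_le _ _).trans (natDegree_map_le.trans hF))
  have hXY : (C X - Y : ℝ[X][Y]).degree = 1 := by
    rw [← neg_sub, degree_neg, degree_X_sub_C]
  have h := degree_le_natDegree.trans (Nat.cast_le.2 hP)
  rw [← C_X_sub_Y_mul_bezoutian, degree_mul, hXY] at h
  generalize (bezoutian F G).degree = d at h ⊢
  induction d using WithBot.recBotCoe with
  | bot => exact WithBot.bot_lt_coe m
  | coe d =>
    rw [← Nat.cast_withBot] at h ⊢
    have : 1 + d ≤ m := by exact_mod_cast h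
    exact_mod_cast (by omega : d < m)

theorem coeff_coeff_bezoutian_eq_zero {m : ℕ} {F G : ℝ[X]} (hF : F.natDegree ≤ m)
    (hG : G.natDegree ≤ m) (j : ℕ) {i : ℕ} (hi : m ≤ i) :
    ((bezoutian F G).coeff j).coeff i = 0 := by
  rw [← swap_bezoutian, coeff_coeff_swap,
    (degree_lt_iff_coeff_zero _ _).1 (degree_bezoutian_lt hF hG) i hi, coeff_zero]

theorem map_evalRingHom_bezoutian_eq_zero {F G : ℝ[X]} {r : ℝ} (hFr : F.eval r = 0)
    (hGr : G.eval r = 0) : (bezoutian F G).map (evalRingHom r) = 0 := by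
  have h := congrArg (map (evalRingHom r)) (C_X_sub_Y_mul_bezoutian F G)
  simp only [Polynomial.map_mul, Polynomial.map_sub, map_C, coe_evalRingHom, eval_X, map_X, hFr,
    hGr, map_zero, zero_mul, mul_zero, sub_self] at h
  exact (mul_eq_zero.1 h).resolve_left (sub_ne_zero.2 (X_ne_C r).symm)

theorem sum_bezMat_mul_pow {m : ℕ} {F G : ℝ[X]} (hF : F.natDegree ≤ m)
    (hG : G.natDegree ≤ m) (r : ℝ) (j : Fin m) :
    ∑ i : Fin m, bezMat m F G i j * r ^ (i : ℕ) = ((bezoutian F G).coeff j).eval r := by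
  have hdeg : ((bezoutian F G).coeff j).natDegree < m := by
    have : ((bezoutian F G).coeff j).natDegree ≤ m - 1 := natDegree_le_iff_coeff_eq_zero.2
      fun N hN => coeff_coeff_bezoutian_eq_zero hF hG j (by omega)
    have := j.isLt
    omega
  rw [eval_eq_sum_range' hdeg, ← Fin.sum_univ_eq_sum_range (fun i => _ * r ^ i)]
  rfl

theorem bezMat_left_kernel_of_common_root_general (m : ℕ) (F G : ℝ[X])
    (hF : F.natDegree ≤ m) (hG : G.natDegree ≤ m) (r : ℝ)
    (hFr : F.eval r = 0) (hGr : G.eval r = 0) :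
    ∀ j : Fin m, ∑ i : Fin m, bezMat m F G i j * r ^ (i : ℕ) = 0 := by
  intro j
  rw [sum_bezMat_mul_pow hF hG, ← coe_evalRingHom, ← coeff_map,
    map_evalRingHom_bezoutian_eq_zero hFr hGr, coeff_zero]

theorem bezMat_left_kernel_of_common_root (m : ℕ) (F G D : ℝ[X])
    (hF : F.natDegree ≤ m) (hG : G.natDegree ≤ m)
    (hDF : D ∣ F) (hDG : D ∣ G) (r : ℝ)
    (hFr : F.eval r = 0) (hGr : G.eval r = 0) :
    ∀ j : Fin m, ∑ i : Fin m, bezMat m F G i j * r ^ (i : ℕ) = 0 :=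
  bezMat_left_kernel_of_common_root_general m F G hF hG r hFr hGr
end

section
/- The rank of the stacked Bézout matrix equals m minus the degree of the gcd: with F_1, ..., F_n real polynomials of degree at most m, deg F_1 = m, and d = deg(gcd(F_1,...,F_n)), the matrix Bez(F_1,...,F_n) has rank m - d. -/
/-!
Column `j` of `Bez(F, G)` holds the coefficients of
`t_j = G · (F div x^(j+1)) - F · (G div x^(j+1))`, a polynomial of degree `< m`. Hence
`Bez(F, G) v = 0` means `G · a = F · b` with `a = ∑ v_j (F div x^(j+1))`, and since `deg F = m`
this is just `F ∣ G · a`. Over all `G = F_i` it says `F ∣ gcd(F_2, …, F_n) · a`, that is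
`F / g ∣ a` for `g = gcd(F_1, …, F_n)`. The polynomials `F div x^(j+1)` have the distinct
degrees `m - 1 - j`, so `v ↦ a` is an isomorphism onto the polynomials of degree `< m`, and the
kernel is isomorphic to the multiples of `F / g` of degree `< m`: a space of dimension `d`.
-/

open Polynomial

/-- The stacked Bézout matrix of `F₁` and `Fs 0, …, Fs (k-1)`:
the vertical stack of `Bez(F₁, Fs i)`. -/
noncomputable def bezStack (m k : ℕ) (F₁ : ℝ[X]) (Fs : Fin k → ℝ[X]) :
    Matrix (Fin k × Fin m) (Fin m) ℝ :=
  fun p j => bezMat m F₁ (Fs p.1) p.2 j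

open Matrix

namespace Polynomial

section Semiring

variable {R : Type*} [Semiring R]

theorem coeff_divX_iterate (k : ℕ) (p : R[X]) (i : ℕ) :
    (divX^[k] p).coeff i = p.coeff (i + k) := by
  induction k generalizing i with
  | zero => rfl
  | succ k ih =>
    rw [Function.iterate_succ_apply', coeff_divX, ih]
    ring_nf

theorem X_mul_divX_iterate_succ_add_C (k : ℕ) (p : R[X]) :
    X * divX^[k + 1] p + C (p.coeff k) = divX^[k] p := by
  rw [Function.iterate_succ_apply']
  simpa only [coeff_divX_iterate, zero_add] using X_mul_divX_add (divX^[k] p)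

theorem natDegree_divX_iterate (k : ℕ) (p : R[X]) :
    (divX^[k] p).natDegree = p.natDegree - k := by
  induction k with
  | zero => rfl
  | succ k ih =>
    rw [Function.iterate_succ_apply', natDegree_divX_eq_natDegree_tsub_one, ih]
    omega

theorem divX_iterate_ne_zero {k : ℕ} {p : R[X]} (hp : p ≠ 0) (hk : k ≤ p.natDegree) :
    divX^[k] p ≠ 0 := by
  intro h
  have := coeff_divX_iterate k p (p.natDegree - k)
  rw [h, coeff_zero, Nat.sub_add_cancel hk, eq_comm] at this
  exact hp (leadingCoeff_eq_zero.mp this)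

theorem degree_mul_lt_iff_degree_lt_sub [NoZeroDivisors R] {p q : R[X]} (hp : p ≠ 0) {m : ℕ}
    (hm : p.natDegree ≤ m) : (p * q).degree < m ↔ q.degree < ↑(m - p.natDegree) := by
  rcases eq_or_ne q 0 with rfl | hq
  · simp
  rw [degree_mul, degree_eq_natDegree hp, degree_eq_natDegree hq]
  norm_cast
  omega

end Semiring

theorem natDegree_sub_X_pow_mul_divX_iterate_le {R : Type*} [Ring R] (k : ℕ) (p : R[X]) :
    (p - X ^ (k + 1) * divX^[k + 1] p).natDegree ≤ k := by
  rw [natDegree_le_iff_coeff_eq_zero]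
  intro i hi
  rw [coeff_sub, coeff_X_pow_mul', if_pos (Nat.succ_le_of_lt hi), coeff_divX_iterate,
    Nat.sub_add_cancel hi, sub_self]

theorem linearIndependent_of_natDegree_injective {ι R : Type*} [CommRing R] [IsDomain R]
    {p : ι → R[X]} (hp : ∀ i, p i ≠ 0) (hinj : Function.Injective (natDegree ∘ p)) :
    LinearIndependent R p := by
  rw [linearIndependent_iff']
  intro s g hsum i hi
  by_contra hgi
  have hdeg (j : ι) (hj : g j ≠ 0) : (g j • p j).degree = (p j).natDegree := by
    rw [smul_eq_C_mul, degree_C_mul hj, degree_eq_natDegree (hp j)]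
  have hpair : Set.Pairwise {j | j ∈ s ∧ g j • p j ≠ 0}
      (Function.onFun Ne (degree ∘ fun j => g j • p j)) := by
    rintro j ⟨-, hj⟩ k ⟨-, hk⟩ hjk
    simp only [Function.onFun, Function.comp_apply, hdeg j (left_ne_zero_of_smul hj),
      hdeg k (left_ne_zero_of_smul hk), ne_eq, Nat.cast_inj]
    exact hinj.ne hjk
  have hsup := Finset.le_sup (f := fun j => (g j • p j).degree) hi
  rw [← degree_sum_eq_of_disjoint _ s hpair, hsum, degree_zero, le_bot_iff, degree_eq_bot,
    smul_eq_zero] at hsup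
  exact hsup.elim hgi (hp i)

section Field

variable {K : Type*} [Field K]

theorem finrank_degreeLT (n : ℕ) : Module.finrank K K[X]_n = n :=
  (degreeLTEquiv K n).finrank_eq.trans (Module.finrank_fin_fun K)

theorem finrank_span_singleton_inf_degreeLT {q : K[X]} (hq : q ≠ 0) {m : ℕ}
    (hm : q.natDegree ≤ m) :
    Module.finrank K ↥((Ideal.span {q}).restrictScalars K ⊓ K[X]_m) = m - q.natDegree := by
  have hmul : Function.Injective (LinearMap.mulLeft K q) := mul_right_injective₀ hq
  have heq : (Ideal.span {q}).restrictScalars K ⊓ K[X]_m =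
      (K[X]_(m - q.natDegree)).map (LinearMap.mulLeft K q) := by
    ext p
    simp only [Submodule.mem_inf, Submodule.restrictScalars_mem, Ideal.mem_span_singleton,
      Submodule.mem_map, LinearMap.mulLeft_apply, mem_degreeLT]
    constructor
    · rintro ⟨⟨r, rfl⟩, hdeg⟩
      exact ⟨r, (degree_mul_lt_iff_degree_lt_sub hq hm).mp hdeg, rfl⟩
    · rintro ⟨r, hdeg, rfl⟩
      exact ⟨dvd_mul_right q r, (degree_mul_lt_iff_degree_lt_sub hq hm).mpr hdeg⟩
  rw [heq, ← (Submodule.equivMapOfInjective _ hmul _).finrank_eq, finrank_degreeLT]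

/-- The `divX^[j + 1] P` are the Horner polynomials of `P`, listed by decreasing degree. -/
noncomputable def hornerCombination (m : ℕ) (P : K[X]) : (Fin m → K) →ₗ[K] K[X] :=
  Fintype.linearCombination K fun j : Fin m => divX^[j + 1] P

theorem hornerCombination_injective {m : ℕ} {P : K[X]} (hP : P.natDegree = m) :
    Function.Injective (hornerCombination m P) := by
  rw [hornerCombination, ← linearIndependent_iff_injective_fintypeLinearCombination]
  refine linearIndependent_of_natDegree_injective
    (fun j => divX_iterate_ne_zero (ne_zero_of_natDegree_gt (n := j) (by omega)) (by omega)) ?_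
  intro j k hjk
  simp only [Function.comp_apply, natDegree_divX_iterate, hP] at hjk
  omega

theorem range_hornerCombination {m : ℕ} {P : K[X]} (hP : P.natDegree = m) :
    LinearMap.range (hornerCombination m P) = K[X]_m := by
  have : FiniteDimensional K K[X]_m := (degreeLTEquiv K m).symm.finiteDimensional
  refine Submodule.eq_of_le_of_finrank_eq ?_ ?_
  · rw [hornerCombination, Fintype.range_linearCombination, Submodule.span_le]
    rintro _ ⟨j, rfl⟩
    rw [SetLike.mem_coe, mem_degreeLT]
    refine degree_le_natDegree.trans_lt ?_
    rw [natDegree_divX_iterate, hP, Nat.cast_lt]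
    omega
  · rw [LinearMap.finrank_range_of_inj (hornerCombination_injective hP),
      Module.finrank_fin_fun, finrank_degreeLT]

end Field

end Polynomial

theorem dvd_mul_iff_dvd_gcd_mul {α : Type*} [CommMonoidWithZero α] [StrongNormalizedGCDMonoid α]
    (a b c : α) : a ∣ c * b ↔ a ∣ gcd a c * b := by
  rw [← ((normalize_associated b).mul_left (gcd a c)).dvd_iff_dvd_right, ← gcd_mul_right,
    dvd_gcd_iff]
  exact (and_iff_right (dvd_mul_right a b)).symm

theorem forall_dvd_mul_iff_dvd_gcd_mul {α ι : Type*} [CommMonoidWithZero α]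
    [StrongNormalizedGCDMonoid α] (s : Finset ι) (f : ι → α) (a b : α) :
    (∀ i ∈ s, a ∣ f i * b) ↔ a ∣ gcd a (s.gcd f) * b := by
  rw [← Finset.dvd_gcd_iff, Finset.gcd_mul_right,
    ((normalize_associated b).mul_left _).dvd_iff_dvd_right, dvd_mul_iff_dvd_gcd_mul]

noncomputable def bezoutianCoeff (F G : ℝ[X]) (j : ℕ) : ℝ[X] :=
  G * divX^[j + 1] F - F * divX^[j + 1] G

theorem X_mul_bezoutianCoeff (F G : ℝ[X]) (j : ℕ) :
    X * bezoutianCoeff F G j =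
      (G * divX^[j] F - F * divX^[j] G) + (F * C (G.coeff j) - G * C (F.coeff j)) := by
  rw [← X_mul_divX_iterate_succ_add_C j F, ← X_mul_divX_iterate_succ_add_C j G, bezoutianCoeff]
  ring

theorem mul_bezoutian (F G : ℝ[X]) :
    (C X - X) * bezoutian F G = C F * G.map C - F.map C * C G := by
  have hroot : (C F * G.map C - F.map C * C G).IsRoot X := by
    simp [eval_map, eval₂_C_X, mul_comm]
  rw [bezoutian]
  linear_combination mul_divByMonic_eq_iff_isRoot.mpr hroot

theorem coeff_bezoutian (F G : ℝ[X]) (j : ℕ) :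
    (bezoutian F G).coeff j = bezoutianCoeff F G j := by
  have hrec (n : ℕ) : X * (bezoutian F G).coeff n - (X * bezoutian F G).coeff n =
      F * C (G.coeff n) - G * C (F.coeff n) := by
    simpa only [sub_mul, coeff_sub, coeff_C_mul, coeff_map, mul_comm _ (C G)] using
      congrArg (coeff · n) (mul_bezoutian F G)
  induction j with
  | zero =>
    refine mul_left_cancel₀ X_ne_zero ?_
    have h0 := hrec 0
    rw [coeff_X_mul_zero, sub_zero] at h0
    rw [h0, X_mul_bezoutianCoeff, Function.iterate_zero_apply, Function.iterate_zero_apply]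
    ring
  | succ n ih =>
    refine mul_left_cancel₀ X_ne_zero ?_
    have hn := hrec (n + 1)
    rw [coeff_X_mul, ih, bezoutianCoeff] at hn
    rw [X_mul_bezoutianCoeff]
    linear_combination hn

theorem bezoutianCoeff_mem_degreeLT {m : ℕ} {F G : ℝ[X]} (hF : F.natDegree ≤ m)
    (hG : G.natDegree ≤ m) (j : ℕ) : bezoutianCoeff F G j ∈ ℝ[X]_m := by
  rw [mem_degreeLT]
  by_cases ht : bezoutianCoeff F G j = 0
  · rw [ht, degree_zero]
    exact WithBot.bot_lt_coe m
  have hX : X ^ (j + 1) * bezoutianCoeff F G j =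
      F * (G - X ^ (j + 1) * divX^[j + 1] G) - G * (F - X ^ (j + 1) * divX^[j + 1] F) := by
    rw [bezoutianCoeff]
    ring
  have hle : (X ^ (j + 1) * bezoutianCoeff F G j).natDegree ≤ m + j := by
    rw [hX]
    refine (natDegree_sub_le _ _).trans (max_le ?_ ?_) <;> refine natDegree_mul_le.trans ?_
    · have := natDegree_sub_X_pow_mul_divX_iterate_le j G
      omega
    · have := natDegree_sub_X_pow_mul_divX_iterate_le j F
      omega
  rw [natDegree_mul (pow_ne_zero _ X_ne_zero) ht, natDegree_X_pow] at hle
  rw [degree_eq_natDegree ht, Nat.cast_lt]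
  omega

theorem sum_smul_bezoutianCoeff (m : ℕ) (F G : ℝ[X]) (v : Fin m → ℝ) :
    ∑ j, v j • bezoutianCoeff F G j =
      G * hornerCombination m F v - F * hornerCombination m G v := by
  simp only [hornerCombination, Fintype.linearCombination_apply, bezoutianCoeff, smul_sub,
    Finset.mul_sum, mul_smul_comm, Finset.sum_sub_distrib]

theorem bezMat_mulVec (m : ℕ) (F G : ℝ[X]) (v : Fin m → ℝ) (i : Fin m) :
    (bezMat m F G *ᵥ v) i =
      (G * hornerCombination m F v - F * hornerCombination m G v).coeff i := by
  rw [← sum_smul_bezoutianCoeff, finsetSum_coeff]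
  simp only [Matrix.mulVec, dotProduct, bezMat, coeff_bezoutian, coeff_smul, smul_eq_mul,
    mul_comm]

theorem bezMat_mulVec_eq_zero_iff {m : ℕ} {F G : ℝ[X]} (hF : F.natDegree = m)
    (hG : G.natDegree ≤ m) (v : Fin m → ℝ) :
    bezMat m F G *ᵥ v = 0 ↔ F ∣ G * hornerCombination m F v := by
  set S := G * hornerCombination m F v - F * hornerCombination m G v with hSdef
  have hS : S ∈ ℝ[X]_m := by
    rw [hSdef, ← sum_smul_bezoutianCoeff]
    exact Submodule.sum_mem _ fun j _ =>
      Submodule.smul_mem _ _ (bezoutianCoeff_mem_degreeLT hF.le hG j)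
  have hmulVec : bezMat m F G *ᵥ v = degreeLTEquiv ℝ m ⟨S, hS⟩ := by
    ext i
    rw [bezMat_mulVec]
    rfl
  rw [hmulVec, degreeLTEquiv_eq_zero_iff_eq_zero hS]
  constructor
  · intro h0
    exact ⟨hornerCombination m G v, sub_eq_zero.mp h0⟩
  · intro hdvd
    by_contra hS0
    refine hS0 (eq_zero_of_dvd_of_natDegree_lt (dvd_sub hdvd (dvd_mul_right _ _)) ?_)
    rw [hF, natDegree_lt_iff_degree_lt hS0]
    exact mem_degreeLT.mp hS

theorem bezStack_mulVec_eq_zero_iff {m n : ℕ} {F : ℝ[X]} {Fs : Fin n → ℝ[X]}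
    (hF : F.natDegree = m) (hFs : ∀ i, (Fs i).natDegree ≤ m) (v : Fin m → ℝ) :
    bezStack m n F Fs *ᵥ v = 0 ↔ ∀ i, F ∣ Fs i * hornerCombination m F v := by
  simp only [← bezMat_mulVec_eq_zero_iff hF (hFs _), funext_iff, Prod.forall]
  rfl

theorem ker_mulVecLin_bezStack {m n : ℕ} {F F₀ : ℝ[X]} {Fs : Fin n → ℝ[X]}
    (hF : F.natDegree = m) (hFs : ∀ i, (Fs i).natDegree ≤ m)
    (hg : gcd F (Finset.univ.gcd Fs) ≠ 0) (hFg : F = gcd F (Finset.univ.gcd Fs) * F₀) :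
    LinearMap.ker (bezStack m n F Fs).mulVecLin =
      ((Ideal.span {F₀}).restrictScalars ℝ).comap (hornerCombination m F) := by
  ext v
  rw [LinearMap.mem_ker, Matrix.mulVecLin_apply, bezStack_mulVec_eq_zero_iff hF hFs,
    Submodule.mem_comap, Submodule.restrictScalars_mem, Ideal.mem_span_singleton,
    ← mul_dvd_mul_iff_left hg, ← hFg]
  simpa using forall_dvd_mul_iff_dvd_gcd_mul Finset.univ Fs F (hornerCombination m F v)

theorem bezStack_rank (m d n : ℕ) (F₁ : ℝ[X]) (Fs : Fin n → ℝ[X])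
    (hF₁ : F₁.natDegree = m) (hFs : ∀ i, (Fs i).natDegree ≤ m)
    (hd : d = (gcd F₁ (Finset.univ.gcd Fs)).natDegree) :
    (bezStack m n F₁ Fs).rank = m - d := by
  rcases Nat.eq_zero_or_pos m with rfl | hm
  · rw [Nat.zero_sub]
    exact Nat.le_zero.mp
      ((Matrix.rank_le_card_width (bezStack 0 n F₁ Fs)).trans_eq (Fintype.card_fin 0))
  have hF₁0 : F₁ ≠ 0 := ne_zero_of_natDegree_gt (n := 0) (by omega)
  have hg : gcd F₁ (Finset.univ.gcd Fs) ≠ 0 := fun h => hF₁0 ((gcd_eq_zero_iff _ _).mp h).1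
  obtain ⟨F₀, hFg⟩ := gcd_dvd_left F₁ (Finset.univ.gcd Fs)
  have hF₀ : F₀ ≠ 0 := right_ne_zero_of_mul (hFg ▸ hF₁0)
  have hdeg : d + F₀.natDegree = m := by rw [hd, ← natDegree_mul hg hF₀, ← hFg, hF₁]
  have hker : Module.finrank ℝ (LinearMap.ker (bezStack m n F₁ Fs).mulVecLin) = d := by
    rw [ker_mulVecLin_bezStack hF₁ hFs hg hFg,
      (Submodule.equivMapOfInjective _ (hornerCombination_injective hF₁) _).finrank_eq,
      Submodule.map_comap_eq, range_hornerCombination hF₁, inf_comm,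
      finrank_span_singleton_inf_degreeLT hF₀ (by omega)]
    omega
  have hrank := LinearMap.finrank_range_add_finrank_ker (bezStack m n F₁ Fs).mulVecLin
  rw [Module.finrank_fin_fun, hker] at hrank
  exact Nat.eq_sub_of_add_eq hrank
end
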